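/- arXiv:2604.09303 — 4 statements merged into one kernel-verified Lean document; each statement's English description precedes it below -/
import Mathlib

section
/- Let V and B be symmetric positive semidefinite real n×n matrices (so that I + V·B is invertible). Then the matrix (I + V·B)⁻¹·V is symmetric and positive semidefinite. -/
open Matrix

/-- If `V` and `B` are symmetric positive semidefinite real `n × n` matrices
(so that `I + V * B` is invertible), then `(I + V * B)⁻¹ * V` is symmetric
positive semidefinite. -/
theorem pdp_inv_one_add_mul_posSemidef {n : ℕ}
    (V B : Matrix (Fin n) (Fin n) ℝ)
    (hV : V.PosSemidef) (hB : B.PosSemidef) :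
    ((1 + V * B)⁻¹ * V).PosSemidef := by
  set S := (open MatrixOrder in CFC.sqrt V) with hSdef
  have hSps : S.PosSemidef := (open MatrixOrder in (CFC.sqrt_nonneg V).posSemidef)
  have hSS : S * S = V := (open MatrixOrder in CFC.sqrt_mul_sqrt_self V hV.nonneg)
  have hSH : Sᴴ = S := hSps.isHermitian.eq
  have hP : (S * B * S).PosSemidef := by
    have := hB.mul_mul_conjTranspose_same S
    rwa [hSH] at this
  have hPD : (1 + S * B * S).PosDef := Matrix.PosDef.one.add_posSemidef hP
  have hPdet : IsUnit (1 + S * B * S).det := (Matrix.isUnit_iff_isUnit_det _).mp hPD.isUnit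
  have hdet : IsUnit (1 + V * B).det := by
    have : (1 + V * B).det = (1 + S * B * S).det := by
      conv_lhs => rw [← hSS, mul_assoc, det_one_add_mul_comm]
    rwa [this]
  have hinv : (1 + S * B * S) * (1 + S * B * S)⁻¹ = 1 :=
    mul_nonsing_inv _ hPdet
  have key : (1 + V * B) * (S * (1 + S * B * S)⁻¹ * S) = V := by
    rw [← hSS]
    have : (1 + S * S * B) * (S * (1 + S * B * S)⁻¹ * S)
        = S * ((1 + S * B * S) * (1 + S * B * S)⁻¹) * S := by
      noncomm_ring
    rw [this, hinv, mul_one]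
  have heq := congrArg ((1 + V * B)⁻¹ * ·) key
  change (1 + V * B)⁻¹ * ((1 + V * B) * (S * (1 + S * B * S)⁻¹ * S)) = (1 + V * B)⁻¹ * V at heq
  rw [← mul_assoc, nonsing_inv_mul _ hdet, one_mul] at heq
  rw [← heq]
  have : ((1 + S * B * S)⁻¹).PosSemidef := hPD.inv.posSemidef
  have := this.mul_mul_conjTranspose_same S
  rwa [hSH] at this
end

section
/- Let V, B, C be real n×n matrices with V, B symmetric positive semidefinite and C symmetric positive semidefinite, and let A be an arbitrary real n×n matrix. Then the Riccati-type update C + Aᵀ·(I + V·B)⁻¹·V·A is symmetric and positive semidefinite. -/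
open Matrix

/-- One step of the PDP backward Riccati-type update preserves symmetric
positive semidefiniteness: if `V`, `B`, `C` are symmetric positive semidefinite
and `A` is arbitrary, then `C + Aᵀ * (I + V * B)⁻¹ * V * A` is symmetric
positive semidefinite. -/
theorem pdp_riccati_step_posSemidef {n : ℕ}
    (V B C A : Matrix (Fin n) (Fin n) ℝ)
    (hV : V.PosSemidef) (hB : B.PosSemidef) (hC : C.PosSemidef) :
    (C + Aᵀ * (1 + V * B)⁻¹ * V * A).PosSemidef := by
  set S := (open scoped MatrixOrder in CFC.sqrt V) with hS
  have hSpsd : S.PosSemidef := by open scoped MatrixOrder in exact (CFC.sqrt_nonneg V).posSemidef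
  have hSherm : Sᴴ = S := hSpsd.1
  have hSS : S * S = V := by open scoped MatrixOrder in exact CFC.sqrt_mul_sqrt_self V hV.nonneg
  set M := 1 + S * B * S with hM
  have hMpd : M.PosDef := by
    have : (Sᴴ * B * S).PosSemidef := hB.conjTranspose_mul_mul_same S
    rw [hSherm] at this
    exact Matrix.PosDef.add_posSemidef Matrix.PosDef.one this
  have hMunit : IsUnit M.det := hMpd.det_pos.ne'.isUnit
  have hdet : IsUnit (1 + V * B).det := by
    have : (1 + V * B).det = M.det := by
      rw [hM, ← hSS]
      calc (1 + S * S * B).det = (1 + S * (S * B)).det := by rw [Matrix.mul_assoc]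
        _ = (1 + (S * B) * S).det := Matrix.det_one_add_mul_comm S (S * B)
        _ = (1 + S * B * S).det := by rw [Matrix.mul_assoc]
    rw [this]; exact hMunit
  have hkey : (1 + V * B)⁻¹ * V = S * M⁻¹ * S := by
    have h1 : (1 + V * B) * (S * M⁻¹ * S) = V := by
      have : (1 + V * B) * (S * M⁻¹ * S) = S * (M * M⁻¹) * S := by
        rw [← hSS, hM]; noncomm_ring
      rw [this, Matrix.mul_nonsing_inv M hMunit, Matrix.mul_one, hSS]
    calc (1 + V * B)⁻¹ * V = (1 + V * B)⁻¹ * ((1 + V * B) * (S * M⁻¹ * S)) := by rw [h1]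
      _ = S * M⁻¹ * S := by
          rw [← Matrix.mul_assoc, Matrix.nonsing_inv_mul _ hdet, Matrix.one_mul]
  have hMinv : (M⁻¹).PosSemidef := hMpd.posSemidef.inv
  have hterm : ((S * A)ᴴ * M⁻¹ * (S * A)).PosSemidef :=
    hMinv.conjTranspose_mul_mul_same (S * A)
  have heq : Aᵀ * (1 + V * B)⁻¹ * V * A = (S * A)ᴴ * M⁻¹ * (S * A) := by
    calc Aᵀ * (1 + V * B)⁻¹ * V * A = Aᵀ * ((1 + V * B)⁻¹ * V) * A := by
          rw [Matrix.mul_assoc Aᵀ]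
      _ = Aᵀ * (S * M⁻¹ * S) * A := by rw [hkey]
      _ = (S * A)ᴴ * M⁻¹ * (S * A) := by
          rw [Matrix.conjTranspose_mul, hSherm,
            Matrix.conjTranspose_eq_transpose_of_trivial]
          noncomm_ring
  rw [heq]
  exact hC.add hterm
end

section
/- Fix a horizon T ≥ 1 and, for each t = 0, …, T−1, real n×n matrices A_t and symmetric positive semidefinite n×n matrices B_t and C_t; let V_T be a symmetric positive semidefinite n×n matrix. Then the backward recursion V_t = C_t + A_tᵀ·(I + V_{t+1}·B_t)⁻¹·V_{t+1}·A_t is well defined for all t = T−1, …, 0 (i.e., each matrix I + V_{t+1}·B_t is invertible), and every V_t is symmetric positive semidefinite. -/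
open Matrix

lemma pdp_key {n : ℕ} {V B : Matrix (Fin n) (Fin n) ℝ}
    (hV : V.PosSemidef) (hB : B.PosSemidef) :
    IsUnit (1 + V * B) ∧ ((1 + V * B)⁻¹ * V).PosSemidef := by
  obtain ⟨S, hSps, hSS⟩ : ∃ S : Matrix (Fin n) (Fin n) ℝ, S.PosSemidef ∧ S * S = V :=
    by open scoped MatrixOrder in exact ⟨CFC.sqrt V, (CFC.sqrt_nonneg V).posSemidef, CFC.sqrt_mul_sqrt_self V hV.nonneg⟩
  have hSH : Sᴴ = S := hSps.isHermitian
  have hST : Sᵀ = S := by rw [← Matrix.conjTranspose_eq_transpose_of_trivial]; exact hSH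
  have hSBS : (S * B * S).PosSemidef := by
    simpa [hSH, hST] using hB.conjTranspose_mul_mul_same S
  have hP : (1 + S * B * S).PosDef := Matrix.PosDef.add_posSemidef Matrix.PosDef.one hSBS
  have hPdet : IsUnit (1 + S * B * S).det := hP.det_pos.ne'.isUnit
  have hdet : (1 + V * B).det = (1 + S * B * S).det := by
    rw [show (1 : Matrix (Fin n) (Fin n) ℝ) + V * B = 1 + S * (S * B) by
      rw [← hSS]; noncomm_ring]
    rw [Matrix.det_one_add_mul_comm, Matrix.mul_assoc]
  have hUnit : IsUnit (1 + V * B) := by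
    rw [Matrix.isUnit_iff_isUnit_det, hdet]; exact hPdet
  refine ⟨hUnit, ?_⟩
  have hPinv : (1 + S * B * S)⁻¹.PosDef := hP.inv
  have hgoal : (1 + V * B)⁻¹ * V = S * (1 + S * B * S)⁻¹ * S := by
    have hcomm : (1 + V * B) * S = S * (1 + S * B * S) := by
      rw [← hSS]; noncomm_ring
    have h1 : (1 + V * B) * (S * (1 + S * B * S)⁻¹ * S) = V := by
      calc (1 + V * B) * (S * (1 + S * B * S)⁻¹ * S)
          = ((1 + V * B) * S) * ((1 + S * B * S)⁻¹ * S) := by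
            simp [Matrix.mul_assoc]
        _ = S * ((1 + S * B * S) * (1 + S * B * S)⁻¹) * S := by
            rw [hcomm]; simp [Matrix.mul_assoc]
        _ = V := by rw [Matrix.mul_nonsing_inv _ hPdet]; simp [hSS]
    calc (1 + V * B)⁻¹ * V
        = (1 + V * B)⁻¹ * ((1 + V * B) * (S * (1 + S * B * S)⁻¹ * S)) := by rw [h1]
      _ = S * (1 + S * B * S)⁻¹ * S := by
          rw [← Matrix.mul_assoc, Matrix.nonsing_inv_mul _ (hdet ▸ hPdet), Matrix.one_mul]
  rw [hgoal]
  simpa [hSH, hST, Matrix.mul_assoc] using hPinv.posSemidef.conjTranspose_mul_mul_same S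

/-- The PDP backward value-curvature recursion
`V t = C t + (A t)ᵀ * (I + V (t+1) * B t)⁻¹ * V (t+1) * A t`
starting from a symmetric positive semidefinite terminal matrix `V T` is well
defined (each `I + V (t+1) * B t` is invertible) and every `V t` is symmetric
positive semidefinite, whenever each `B t` and `C t` is symmetric positive
semidefinite. -/
theorem pdp_backward_recursion_posSemidef {n : ℕ} (T : ℕ) (hT : 1 ≤ T)
    (A B C : ℕ → Matrix (Fin n) (Fin n) ℝ)
    (hB : ∀ t < T, (B t).PosSemidef) (hC : ∀ t < T, (C t).PosSemidef)
    (V : ℕ → Matrix (Fin n) (Fin n) ℝ)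
    (hVT : (V T).PosSemidef)
    (hrec : ∀ t < T, V t = C t + (A t)ᵀ * (1 + V (t + 1) * B t)⁻¹ * V (t + 1) * A t) :
    (∀ t < T, IsUnit (1 + V (t + 1) * B t)) ∧ (∀ t ≤ T, (V t).PosSemidef) := by
  have hpsd : ∀ k, ∀ t, t + k = T → (V t).PosSemidef := by
    intro k
    induction k with
    | zero =>
      intro t ht
      have : t = T := by omega
      subst this; exact hVT
    | succ k ih =>
      intro t ht
      have htT : t < T := by omega
      have hV1 : (V (t + 1)).PosSemidef := ih (t + 1) (by omega)
      obtain ⟨hu, hpsd⟩ := pdp_key hV1 (hB t htT)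
      rw [hrec t htT]
      have := hpsd.conjTranspose_mul_mul_same (A t)
      refine (hC t htT).add ?_
      have h2 : (A t)ᴴ = (A t)ᵀ := Matrix.conjTranspose_eq_transpose_of_trivial _
      rw [← h2]
      simpa [Matrix.mul_assoc] using this
  constructor
  · intro t htT
    exact (pdp_key (hpsd (T - (t + 1)) (t + 1) (by omega)) (hB t htT)).1
  · intro t htT
    exact hpsd (T - t) t (by omega)
end

section
/- Fix real matrices F ∈ ℝ^{n×n}, G ∈ ℝ^{n×m}, E ∈ ℝ^{n×s}, H_ux ∈ ℝ^{m×n}, H_uu ∈ ℝ^{m×m} invertible, H_uθ ∈ ℝ^{m×s}, and define A = F − G·H_uu⁻¹·H_ux, B = G·H_uu⁻¹·Gᵀ, M = E − G·H_uu⁻¹·H_uθ. Let V₊ ∈ ℝ^{n×n}, W₊ ∈ ℝ^{n×s} with I + V₊·B invertible, and let X ∈ ℝ^{n×s}. Define the feedback U = −H_uu⁻¹·(H_ux·X + H_uθ + Gᵀ·(I + V₊·B)⁻¹·(V₊·A·X + V₊·M + W₊)), the next state X₊ = F·X + G·U + E, and the next costate Λ₊ = V₊·X₊ + W₊. Then the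 stationarity equation holds: H_ux·X + H_uu·U + H_uθ + Gᵀ·Λ₊ = 0. -/
open Matrix

private lemma pdp_aux {n m s : ℕ}
    (F : Matrix (Fin n) (Fin n) ℝ) (G : Matrix (Fin n) (Fin m) ℝ)
    (E : Matrix (Fin n) (Fin s) ℝ)
    (Hux : Matrix (Fin m) (Fin n) ℝ) (Huu : Matrix (Fin m) (Fin m) ℝ)
    (Hiu : Matrix (Fin m) (Fin m) ℝ) (h1 : Huu * Hiu = 1)
    (Huθ : Matrix (Fin m) (Fin s) ℝ)
    (Vp : Matrix (Fin n) (Fin n) ℝ) (Wp : Matrix (Fin n) (Fin s) ℝ)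
    (K : Matrix (Fin n) (Fin n) ℝ)
    (hK1 : (1 + Vp * (G * Hiu * Gᵀ)) * K = 1)
    (X Y : Matrix (Fin n) (Fin s) ℝ)
    (hY : Y = Vp * (F - G * Hiu * Hux) * X + Vp * (E - G * Hiu * Huθ) + Wp)
    (U : Matrix (Fin m) (Fin s) ℝ)
    (hU : U = -(Hiu * (Hux * X + Huθ + Gᵀ * K * Y))) :
    Hux * X + Huu * U + Huθ + Gᵀ * (Vp * (F * X + G * U + E) + Wp) = 0 := by
  have hK : K * Y + Vp * (G * Hiu * Gᵀ) * (K * Y) = Y := by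
    have h := congrArg (fun Z => Z * Y) hK1
    simpa [Matrix.add_mul, Matrix.one_mul, Matrix.mul_assoc] using h
  have e1 : Huu * U = -(Hux * X + Huθ + Gᵀ * (K * Y)) := by
    rw [hU, Matrix.mul_neg, ← Matrix.mul_assoc, h1, Matrix.one_mul, Matrix.mul_assoc Gᵀ]
  have e2 : Vp * (F * X + G * U + E) + Wp = K * Y := by
    have expand : Vp * (F * X + G * U + E) + Wp
        = Y - Vp * (G * Hiu * Gᵀ) * (K * Y) := by
      rw [hU, hY]
      simp only [Matrix.mul_add, Matrix.add_mul, Matrix.sub_mul, Matrix.mul_sub,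
        Matrix.mul_neg, Matrix.neg_mul, Matrix.mul_assoc, Matrix.mul_one, Matrix.one_mul]
      abel
    exact expand.trans (eq_sub_of_add_eq hK).symm
  rw [e1, e2]; abel

/-- One-step forward pass of PDP: with `A = F - G * Huu⁻¹ * Hux`,
`B = G * Huu⁻¹ * Gᵀ`, `M = E - G * Huu⁻¹ * Huθ`, the PDP feedback
`U = -Huu⁻¹ * (Hux * X + Huθ + Gᵀ * (I + V₊ * B)⁻¹ * (V₊ * A * X + V₊ * M + W₊))`,
next state `X₊ = F * X + G * U + E` and next costate `Λ₊ = V₊ * X₊ + W₊`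
satisfy the stationarity equation `Hux * X + Huu * U + Huθ + Gᵀ * Λ₊ = 0`. -/
theorem pdp_forward_step_stationarity {n m s : ℕ}
    (F : Matrix (Fin n) (Fin n) ℝ) (G : Matrix (Fin n) (Fin m) ℝ)
    (E : Matrix (Fin n) (Fin s) ℝ)
    (Hux : Matrix (Fin m) (Fin n) ℝ) (Huu : Matrix (Fin m) (Fin m) ℝ)
    (hHuu : IsUnit Huu)
    (Huθ : Matrix (Fin m) (Fin s) ℝ)
    (A : Matrix (Fin n) (Fin n) ℝ) (hA : A = F - G * Huu⁻¹ * Hux)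
    (B : Matrix (Fin n) (Fin n) ℝ) (hB : B = G * Huu⁻¹ * Gᵀ)
    (M : Matrix (Fin n) (Fin s) ℝ) (hM : M = E - G * Huu⁻¹ * Huθ)
    (Vp : Matrix (Fin n) (Fin n) ℝ) (Wp : Matrix (Fin n) (Fin s) ℝ)
    (hInv : IsUnit (1 + Vp * B))
    (X : Matrix (Fin n) (Fin s) ℝ)
    (U : Matrix (Fin m) (Fin s) ℝ)
    (hU : U = -(Huu⁻¹ * (Hux * X + Huθ + Gᵀ * (1 + Vp * B)⁻¹ * (Vp * A * X + Vp * M + Wp))))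
    (Xp : Matrix (Fin n) (Fin s) ℝ) (hXp : Xp = F * X + G * U + E)
    (Λp : Matrix (Fin n) (Fin s) ℝ) (hΛp : Λp = Vp * Xp + Wp) :
    Hux * X + Huu * U + Huθ + Gᵀ * Λp = 0 := by
  subst hA hB hM hXp hΛp
  have h1 : Huu * Huu⁻¹ = 1 :=
    Matrix.mul_nonsing_inv _ ((Matrix.isUnit_iff_isUnit_det _).mp hHuu)
  have hK1 : (1 + Vp * (G * Huu⁻¹ * Gᵀ)) * (1 + Vp * (G * Huu⁻¹ * Gᵀ))⁻¹ = 1 :=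
    Matrix.mul_nonsing_inv _ ((Matrix.isUnit_iff_isUnit_det _).mp hInv)
  exact pdp_aux F G E Hux Huu Huu⁻¹ h1 Huθ Vp Wp _ hK1 X _ rfl U hU
end
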